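/- Within one epoch of local GD with γ ≤ 1/(4LH), Σ_{t=t_p}^{t_{p+1}−1} [(3/2)L V_t − (f(x̂_t) − f(x_*))] ≤ −(1/2) Σ_{t=t_p}^{t_{p+1}−1} (f(x̂_t) − f(x_*)) + 12Lγ²H²σ² (t_{p+1} − t_p). -/

import Mathlib

open Finset RealInnerProductSpace

/-- Average of vectors. -/
noncomputable def avgV {d M : ℕ} (x : Fin M → EuclideanSpace ℝ (Fin d)) :
    EuclideanSpace ℝ (Fin d) := (1 / (M : ℝ)) • ∑ m, x m

/-- Average of reals. -/
noncomputable def avgR {M : ℕ} (a : Fin M → ℝ) : ℝ := (1 / (M : ℝ)) * ∑ m, a m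

/-! Every client starts the epoch at the common average `x̂_{t_p}`, so after `t - t_p` local
steps its distance to that point is `γ` times a sum of `t - t_p` of its own gradients; since
the mean minimises the mean squared distance,
`V_t ≤ γ² (t - t_p) Σ_j avg_m ‖∇f_m(x_j^m)‖²`.
Cocoercivity, `‖a + b + c‖² ≤ 4‖a‖² + 4‖b‖² + 2‖c‖²` and `∇f(x_*) = 0` bound each
`avg_m ‖∇f_m(x_j^m)‖²` by `4L² V_j + 8L (f(x̂_j) - f(x_*)) + 2σ²`.
Summing over the epoch, with `Σ_t (t - t_p) ≤ H²/2`, bounds `Σ V_t` by `γ²H²/2` times a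
combination of `Σ V_t`, the gaps and `σ²`, and `γ²L²H² ≤ 1/16` lets the `Σ V_t` term be
absorbed. -/

section Bregman

variable {E : Type*} [NormedAddCommGroup E] [InnerProductSpace ℝ E]

/-- `D_f(x, y)`, with `g` in the role of `∇f`. -/
def bregman (f : E → ℝ) (g : E → E) (x y : E) : ℝ := f x - f y - ⟪g y, x - y⟫

lemma norm_sq_le_of_quadratic_upper_bound {F : E → ℝ} {G z : E} {L c : ℝ} (hL : 0 < L)
    (hlow : ∀ y, c ≤ F y) (hup : ∀ y, F y - F z - ⟪G, y - z⟫ ≤ L / 2 * ‖y - z‖ ^ 2) :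
    ‖G‖ ^ 2 ≤ 2 * L * (F z - c) := by
  have hdescent := hup (z - L⁻¹ • G)
  rw [sub_sub_cancel_left, inner_neg_right, real_inner_smul_right, real_inner_self_eq_norm_sq,
    norm_neg, norm_smul, mul_pow, Real.norm_eq_abs, sq_abs,
    show L / 2 * (L⁻¹ ^ 2 * ‖G‖ ^ 2) = L⁻¹ * ‖G‖ ^ 2 / 2 by field_simp] at hdescent
  have hgap : L⁻¹ * ‖G‖ ^ 2 ≤ 2 * (F z - c) := by linarith [hlow (z - L⁻¹ • G)]
  rw [inv_mul_le_iff₀ hL] at hgap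
  linarith

variable {f : E → ℝ} {g : E → E} {L : ℝ}

lemma norm_sub_sq_le_bregman (hL : 0 < L) (h0 : ∀ x y, 0 ≤ bregman f g x y)
    (hs : ∀ x y, bregman f g x y ≤ L / 2 * ‖x - y‖ ^ 2) (a b : E) :
    ‖g a - g b‖ ^ 2 ≤ 2 * L * bregman f g a b := by
  have key := norm_sq_le_of_quadratic_upper_bound (F := fun y => f y - ⟪g b, y⟫)
    (G := g a - g b) (z := a) (c := f b - ⟪g b, b⟫) hL
    (fun y => by have := h0 y b; simp only [bregman, inner_sub_right] at this; linarith)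
    (fun y => by
      have := hs y a; simp only [bregman, inner_sub_left, inner_sub_right] at this ⊢; linarith)
  convert key using 2
  simp only [bregman, inner_sub_right]
  ring

lemma norm_sq_le_of_bregman (hL : 0 < L) (h0 : ∀ x y, 0 ≤ bregman f g x y)
    (hs : ∀ x y, bregman f g x y ≤ L / 2 * ‖x - y‖ ^ 2) (a b c : E) :
    ‖g a‖ ^ 2 ≤ 4 * L ^ 2 * ‖a - b‖ ^ 2 + 8 * L * bregman f g b c + 2 * ‖g c‖ ^ 2 := by
  have hsq : ∀ u v : E, ‖u + v‖ ^ 2 ≤ 2 * (‖u‖ ^ 2 + ‖v‖ ^ 2) := fun u v =>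
    (pow_le_pow_left₀ (norm_nonneg _) (norm_add_le u v) 2).trans add_sq_le
  have hab : ‖g a - g b‖ ^ 2 ≤ L ^ 2 * ‖a - b‖ ^ 2 := by
    nlinarith [norm_sub_sq_le_bregman hL h0 hs a b, hs a b]
  have hbc := norm_sub_sq_le_bregman hL h0 hs b c
  have hac := hsq (g a - g b) (g b - g c)
  have hsplit := hsq (g a - g c) (g c)
  rw [sub_add_sub_cancel] at hac
  rw [sub_add_cancel] at hsplit
  linarith

end Bregman

lemma norm_sum_sq_le_card_mul {E ι : Type*} [SeminormedAddCommGroup E] (s : Finset ι)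
    (v : ι → E) : ‖∑ i ∈ s, v i‖ ^ 2 ≤ #s * ∑ i ∈ s, ‖v i‖ ^ 2 :=
  (pow_le_pow_left₀ (norm_nonneg _) (norm_sum_le _ _) 2).trans sq_sum_le_card_mul_sum_sq

lemma sum_Ico_sub_le_sq_div_two {a b H : ℕ} (hH : b - a ≤ H) :
    ∑ t ∈ Ico a b, ((t - a : ℕ) : ℝ) ≤ (H : ℝ) ^ 2 / 2 := by
  have hnat : (∑ t ∈ Ico a b, (t - a)) * 2 ≤ H ^ 2 := by
    rw [sum_Ico_eq_sum_range]
    simp only [Nat.add_sub_cancel_left]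
    rw [sum_range_id_mul_two, sq]
    exact Nat.mul_le_mul hH (by omega)
  rw [le_div_iff₀ two_pos, ← Nat.cast_sum]
  exact_mod_cast hnat

section Averages

variable {M : ℕ}

lemma avgR_mono {a b : Fin M → ℝ} (h : ∀ m, a m ≤ b m) : avgR a ≤ avgR b :=
  mul_le_mul_of_nonneg_left (sum_le_sum fun m _ => h m) (by positivity)

lemma avgR_nonneg {a : Fin M → ℝ} (h : ∀ m, 0 ≤ a m) : 0 ≤ avgR a :=
  mul_nonneg (by positivity) (sum_nonneg fun m _ => h m)

lemma avgR_add (a b : Fin M → ℝ) : avgR (fun m => a m + b m) = avgR a + avgR b := by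
  simp only [avgR, sum_add_distrib, mul_add]

lemma avgR_sub (a b : Fin M → ℝ) : avgR (fun m => a m - b m) = avgR a - avgR b := by
  simp only [avgR, sum_sub_distrib, mul_sub]

lemma avgR_const_mul (c : ℝ) (a : Fin M → ℝ) : avgR (fun m => c * a m) = c * avgR a := by
  simp only [avgR, ← mul_sum]
  ring

lemma avgR_sum {ι : Type*} (s : Finset ι) (a : ι → Fin M → ℝ) :
    avgR (fun m => ∑ i ∈ s, a i m) = ∑ i ∈ s, avgR (a i) := by
  simp only [avgR, mul_sum]
  exact sum_comm

lemma avgR_const (hM : 0 < M) (c : ℝ) : avgR (fun _ : Fin M => c) = c := by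
  simp only [avgR, sum_const, card_univ, Fintype.card_fin, nsmul_eq_mul]
  field_simp

variable {d : ℕ}

lemma avgR_inner_left (v : Fin M → EuclideanSpace ℝ (Fin d)) (w : EuclideanSpace ℝ (Fin d)) :
    avgR (fun m => ⟪v m, w⟫) = ⟪avgV v, w⟫ := by
  rw [avgV, avgR, real_inner_smul_left, sum_inner]

lemma sum_sub_avgV (v : Fin M → EuclideanSpace ℝ (Fin d)) : ∑ m, (v m - avgV v) = 0 := by
  rcases Nat.eq_zero_or_pos M with rfl | hM
  · simp
  rw [sum_sub_distrib, sum_const, card_univ, Fintype.card_fin, avgV,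
    ← Nat.cast_smul_eq_nsmul ℝ, smul_smul, mul_one_div_cancel (by positivity), one_smul, sub_self]

lemma avgR_norm_sub_avgV_sq_le (v : Fin M → EuclideanSpace ℝ (Fin d))
    (c : EuclideanSpace ℝ (Fin d)) :
    avgR (fun m => ‖v m - avgV v‖ ^ 2) ≤ avgR (fun m => ‖v m - c‖ ^ 2) := by
  have hexpand : ∀ m, ‖v m - c‖ ^ 2
      = ‖v m - avgV v‖ ^ 2 + 2 * ⟪v m - avgV v, avgV v - c⟫ + ‖avgV v - c‖ ^ 2 := fun m => by
    rw [← norm_add_sq_real, sub_add_sub_cancel]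
  simp only [avgR, hexpand, sum_add_distrib, ← mul_sum, ← sum_inner, sum_sub_avgV,
    inner_zero_left, mul_zero, add_zero]
  gcongr
  exact le_add_of_nonneg_right (sum_nonneg fun m _ => sq_nonneg _)

end Averages

lemma eq_sub_smul_sum_Ico_of_step {E : Type*} [AddCommGroup E] [Module ℝ E] {y d : ℕ → E}
    {γ : ℝ} {tp tp1 : ℕ} (hstep : ∀ t, tp ≤ t → t + 1 < tp1 → y (t + 1) = y t - γ • d t)
    {t : ℕ} (ht : tp ≤ t) (ht1 : t < tp1) : y t = y tp - γ • ∑ j ∈ Ico tp t, d j := by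
  induction t, ht using Nat.le_induction with
  | base => simp
  | succ t ht ih =>
    rw [hstep t ht ht1, ih (by omega), sum_Ico_succ_top ht, smul_add, sub_sub]

section LocalSteps

variable {d M : ℕ} {x u : ℕ → Fin M → EuclideanSpace ℝ (Fin d)} {γ : ℝ} {tp tp1 : ℕ}

lemma variance_le_of_local_steps (hstart : ∀ m, x tp m = avgV (x tp))
    (hstep : ∀ t m, tp ≤ t → t + 1 < tp1 → x (t + 1) m = x t m - γ • u t m)
    {t : ℕ} (ht : tp ≤ t) (ht1 : t < tp1) :
    avgR (fun m => ‖x t m - avgV (x t)‖ ^ 2)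
      ≤ γ ^ 2 * (t - tp : ℕ) * ∑ j ∈ Ico tp t, avgR (fun m => ‖u j m‖ ^ 2) := by
  have hdrift : ∀ m, x t m - avgV (x tp) = -(γ • ∑ j ∈ Ico tp t, u j m) := fun m => by
    rw [eq_sub_smul_sum_Ico_of_step (y := fun t => x t m)
      (fun t ht ht1 => hstep t m ht ht1) ht ht1, ← hstart m, sub_sub_cancel_left]
  calc avgR (fun m => ‖x t m - avgV (x t)‖ ^ 2)
      ≤ avgR (fun m => ‖x t m - avgV (x tp)‖ ^ 2) := avgR_norm_sub_avgV_sq_le _ _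
    _ ≤ avgR (fun m => γ ^ 2 * ((t - tp : ℕ) * ∑ j ∈ Ico tp t, ‖u j m‖ ^ 2)) := by
      refine avgR_mono fun m => ?_
      rw [hdrift, norm_neg, norm_smul, mul_pow, Real.norm_eq_abs, sq_abs, ← Nat.card_Ico]
      gcongr
      exact norm_sum_sq_le_card_mul _ _
    _ = γ ^ 2 * (t - tp : ℕ) * ∑ j ∈ Ico tp t, avgR (fun m => ‖u j m‖ ^ 2) := by
      rw [avgR_const_mul, avgR_const_mul, avgR_sum, mul_assoc]

lemma sum_variance_le_of_local_steps {H : ℕ} (hstart : ∀ m, x tp m = avgV (x tp))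
    (hstep : ∀ t m, tp ≤ t → t + 1 < tp1 → x (t + 1) m = x t m - γ • u t m)
    (hH : tp1 - tp ≤ H) :
    ∑ t ∈ Ico tp tp1, avgR (fun m => ‖x t m - avgV (x t)‖ ^ 2)
      ≤ γ ^ 2 * H ^ 2 / 2 * ∑ j ∈ Ico tp tp1, avgR (fun m => ‖u j m‖ ^ 2) := by
  set S := ∑ j ∈ Ico tp tp1, avgR (fun m => ‖u j m‖ ^ 2)
  have hprefix : ∀ t ∈ Ico tp tp1, ∑ j ∈ Ico tp t, avgR (fun m => ‖u j m‖ ^ 2) ≤ S := fun t ht =>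
    sum_le_sum_of_subset_of_nonneg (Ico_subset_Ico_right (mem_Ico.mp ht).2.le)
      fun j _ _ => avgR_nonneg fun m => sq_nonneg _
  calc ∑ t ∈ Ico tp tp1, avgR (fun m => ‖x t m - avgV (x t)‖ ^ 2)
      ≤ ∑ t ∈ Ico tp tp1, γ ^ 2 * (t - tp : ℕ) * S := sum_le_sum fun t ht =>
        (variance_le_of_local_steps hstart hstep (mem_Ico.mp ht).1 (mem_Ico.mp ht).2).trans
          (by gcongr; exact hprefix t ht)
    _ = γ ^ 2 * (∑ t ∈ Ico tp tp1, ((t - tp : ℕ) : ℝ)) * S := by rw [← sum_mul, ← mul_sum]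
    _ ≤ γ ^ 2 * H ^ 2 / 2 * S := by
      rw [mul_div_assoc]
      gcongr
      · exact sum_nonneg fun j _ => avgR_nonneg fun m => sq_nonneg _
      · exact sum_Ico_sub_le_sq_div_two hH

end LocalSteps

section Heterogeneous

variable {d M : ℕ} {L : ℝ} {f : Fin M → EuclideanSpace ℝ (Fin d) → ℝ}
  {g : Fin M → EuclideanSpace ℝ (Fin d) → EuclideanSpace ℝ (Fin d)}
  {xstar : EuclideanSpace ℝ (Fin d)}

lemma avgR_bregman (y z : EuclideanSpace ℝ (Fin d)) :
    avgR (fun m => bregman (f m) (g m) y z)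
      = avgR (fun m => f m y) - avgR (fun m => f m z) - ⟪avgV (fun m => g m z), y - z⟫ := by
  simp only [bregman, avgR_sub, avgR_inner_left]

lemma avgV_grad_eq_zero_of_isMin (hM : 0 < M) (hL : 0 < L)
    (hs : ∀ m x y, bregman (f m) (g m) x y ≤ L / 2 * ‖x - y‖ ^ 2)
    (hmin : ∀ y, avgR (fun m => f m xstar) ≤ avgR (fun m => f m y)) :
    avgV (fun m => g m xstar) = 0 := by
  have h := norm_sq_le_of_quadratic_upper_bound (F := fun y => avgR (fun m => f m y))
    (z := xstar) hL hmin fun y => by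
      rw [← avgR_bregman, ← avgR_const hM (L / 2 * ‖y - xstar‖ ^ 2)]
      exact avgR_mono fun m => hs m y xstar
  rw [sub_self, mul_zero] at h
  exact norm_eq_zero.mp (pow_eq_zero_iff two_ne_zero |>.mp (le_antisymm h (sq_nonneg _)))

lemma avgR_norm_grad_sq_le (hM : 0 < M) (hL : 0 < L)
    (h0 : ∀ m x y, 0 ≤ bregman (f m) (g m) x y)
    (hs : ∀ m x y, bregman (f m) (g m) x y ≤ L / 2 * ‖x - y‖ ^ 2)
    (hmin : ∀ y, avgR (fun m => f m xstar) ≤ avgR (fun m => f m y))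
    (y : Fin M → EuclideanSpace ℝ (Fin d)) :
    avgR (fun m => ‖g m (y m)‖ ^ 2)
      ≤ 4 * L ^ 2 * avgR (fun m => ‖y m - avgV y‖ ^ 2)
        + 8 * L * (avgR (fun m => f m (avgV y)) - avgR (fun m => f m xstar))
        + 2 * avgR (fun m => ‖g m xstar‖ ^ 2) := by
  have hgap : avgR (fun m => bregman (f m) (g m) (avgV y) xstar)
      = avgR (fun m => f m (avgV y)) - avgR (fun m => f m xstar) := by
    rw [avgR_bregman, avgV_grad_eq_zero_of_isMin hM hL hs hmin, inner_zero_left, sub_zero]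
  rw [← hgap, ← avgR_const_mul, ← avgR_const_mul, ← avgR_const_mul, ← avgR_add, ← avgR_add]
  exact avgR_mono fun m => norm_sq_le_of_bregman hL (h0 m) (hs m) _ _ _

end Heterogeneous

theorem epoch_variance_gap_sum_bound_general {d M : ℕ} (hM : 0 < M) (L γ : ℝ)
    (hL : 0 < L)
    (f : Fin M → EuclideanSpace ℝ (Fin d) → ℝ)
    (g : Fin M → EuclideanSpace ℝ (Fin d) → EuclideanSpace ℝ (Fin d))
    (hsc : ∀ m x y, 0 ≤ f m x - f m y - ⟪g m y, x - y⟫ ∧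
      f m x - f m y - ⟪g m y, x - y⟫ ≤ L / 2 * ‖x - y‖ ^ 2)
    (xstar : EuclideanSpace ℝ (Fin d))
    (hmin : ∀ y, avgR (fun m => f m xstar) ≤ avgR (fun m => f m y))
    (x : ℕ → Fin M → EuclideanSpace ℝ (Fin d))
    (tp tp1 H : ℕ) (hH : tp1 - tp ≤ H)
    (hγ0 : 0 < γ) (hγ : γ ≤ 1 / (4 * L * H))
    (hstart : ∀ m, x tp m = avgV (x tp))
    (hstep : ∀ t m, tp ≤ t → t + 1 < tp1 →
      x (t + 1) m = x t m - γ • g m (x t m)) :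
    ∑ t ∈ Finset.Ico tp tp1,
        ((3 / 2) * L * avgR (fun m => ‖x t m - avgV (x t)‖ ^ 2)
          - (avgR (fun m => f m (avgV (x t))) - avgR (fun m => f m xstar))) ≤
      -(1 / 2) * ∑ t ∈ Finset.Ico tp tp1,
          (avgR (fun m => f m (avgV (x t))) - avgR (fun m => f m xstar))
      + 12 * L * γ ^ 2 * H ^ 2 * avgR (fun m => ‖g m xstar‖ ^ 2) *
          ((tp1 - tp : ℕ) : ℝ) := by
  set V := ∑ t ∈ Ico tp tp1, avgR (fun m => ‖x t m - avgV (x t)‖ ^ 2)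
  set G := ∑ t ∈ Ico tp tp1, (avgR (fun m => f m (avgV (x t))) - avgR (fun m => f m xstar))
  set σsq := avgR (fun m => ‖g m xstar‖ ^ 2)
  set S := ∑ j ∈ Ico tp tp1, avgR (fun m => ‖g m (x j m)‖ ^ 2)
  have hV : V ≤ γ ^ 2 * H ^ 2 / 2 * S := sum_variance_le_of_local_steps hstart hstep hH
  have hS : S ≤ 4 * L ^ 2 * V + 8 * L * G + 2 * σsq * (tp1 - tp : ℕ) := by
    calc S ≤ ∑ t ∈ Ico tp tp1, (4 * L ^ 2 * avgR (fun m => ‖x t m - avgV (x t)‖ ^ 2)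
          + 8 * L * (avgR (fun m => f m (avgV (x t))) - avgR (fun m => f m xstar))
          + 2 * σsq) :=
          sum_le_sum fun t _ => avgR_norm_grad_sq_le hM hL (fun m x y => (hsc m x y).1)
            (fun m x y => (hsc m x y).2) hmin (x t)
      _ = 4 * L ^ 2 * V + 8 * L * G + 2 * σsq * (tp1 - tp : ℕ) := by
          rw [sum_add_distrib, sum_add_distrib, ← mul_sum, ← mul_sum, sum_const, Nat.card_Ico,
            nsmul_eq_mul]
          ring
  have hV0 : 0 ≤ V := sum_nonneg fun t _ => avgR_nonneg fun m => sq_nonneg _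
  have hG0 : 0 ≤ G := sum_nonneg fun t _ => sub_nonneg.mpr (hmin _)
  have hσsq : 0 ≤ σsq := avgR_nonneg fun m => sq_nonneg _
  have hstepsize : (γ * (4 * L * H)) ^ 2 ≤ 1 := by
    -- `1 / 0 = 0`, so `0 < γ ≤ 1 / (4 L H)` already forces `H ≠ 0`
    have hLH : 0 < 4 * L * H := one_div_pos.mp (hγ0.trans_le hγ)
    exact pow_le_one₀ (by positivity) ((le_div_iff₀ hLH).mp hγ)
  have hrec := hV.trans (mul_le_mul_of_nonneg_left hS (by positivity))
  rw [sum_sub_distrib, ← mul_sum]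
  nlinarith [mul_le_mul_of_nonneg_left hrec hL.le,
    mul_le_mul_of_nonneg_right hstepsize (mul_nonneg hL.le hV0),
    mul_le_mul_of_nonneg_right hstepsize hG0,
    mul_nonneg (mul_nonneg hL.le hσsq) (sq_nonneg (γ * H))]

/-- Lemma 2, second part: Within one epoch of local GD with
`0 < γ ≤ 1/(4LH)`:
`∑_{t=t_p}^{t_{p+1}−1} [(3/2)L V_t − (f(x̂_t) − f(x⋆))]
  ≤ −(1/2) ∑_{t=t_p}^{t_{p+1}−1} (f(x̂_t) − f(x⋆)) + 12Lγ²H²σ² (t_{p+1} − t_p)`. -/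
theorem epoch_variance_gap_sum_bound {d M : ℕ} (hM : 0 < M) (L γ : ℝ)
    (hL : 0 < L)
    (f : Fin M → EuclideanSpace ℝ (Fin d) → ℝ)
    (g : Fin M → EuclideanSpace ℝ (Fin d) → EuclideanSpace ℝ (Fin d))
    (hsc : ∀ m x y, 0 ≤ f m x - f m y - ⟪g m y, x - y⟫ ∧
      f m x - f m y - ⟪g m y, x - y⟫ ≤ L / 2 * ‖x - y‖ ^ 2)
    (xstar : EuclideanSpace ℝ (Fin d))
    (hmin : ∀ y, avgR (fun m => f m xstar) ≤ avgR (fun m => f m y))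
    (x : ℕ → Fin M → EuclideanSpace ℝ (Fin d))
    (tp tp1 H : ℕ) (htp : tp < tp1) (hH1 : 1 ≤ H) (hH : tp1 - tp ≤ H)
    (hγ0 : 0 < γ) (hγ : γ ≤ 1 / (4 * L * H))
    (hstart : ∀ m, x tp m = avgV (x tp))
    (hstep : ∀ t m, tp ≤ t → t + 1 < tp1 →
      x (t + 1) m = x t m - γ • g m (x t m)) :
    ∑ t ∈ Finset.Ico tp tp1,
        ((3 / 2) * L * avgR (fun m => ‖x t m - avgV (x t)‖ ^ 2)
          - (avgR (fun m => f m (avgV (x t))) - avgR (fun m => f m xstar))) ≤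
      -(1 / 2) * ∑ t ∈ Finset.Ico tp tp1,
          (avgR (fun m => f m (avgV (x t))) - avgR (fun m => f m xstar))
      + 12 * L * γ ^ 2 * H ^ 2 * avgR (fun m => ‖g m xstar‖ ^ 2) *
          ((tp1 - tp : ℕ) : ℝ) :=
  epoch_variance_gap_sum_bound_general hM L γ hL f g hsc xstar hmin x tp tp1 H hH hγ0 hγ hstart
    hstep
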